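/- Let p be an odd prime, m ≥ 2. Let D be the m×m tridiagonal symmetric matrix over F_p with all diagonal entries 0 except the entry at position (s,s) equal to -2e (with e ≠ 0), and off-diagonal entries D_{i,i+1} = D_{i+1,i} = c_i with all c_i ≠ 0. If m is even, then det(D) = ∏_{k=1}^{m/2} (-c_{2k-1}²) ≠ 0. If m is odd and s is odd, then det(D) = (-2e) · ∏_{k=1}^{(s-1)/2}(-c_{2k-1}²) · ∏_{k=(s+1)/2}^{(m-1)/2}(-c_{2k}²) ≠ 0. -/
import Mathlib


open scoped BigOperators Matrix

/-- The symmetric tridiagonal `m × m` matrix (with 1-based entry conventions)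
whose diagonal is zero except for the entry `-2e` at the `s`-th diagonal
position, and whose off-diagonal entries at positions `(k, k+1)` and
`(k+1, k)` (1-based) are `c k`. -/
def triD (p m : ℕ) (s : ℕ) (e : ZMod p) (c : ℕ → ZMod p) :
    Matrix (Fin m) (Fin m) (ZMod p) :=
  Matrix.of fun i j =>
    if i = j then (if (i : ℕ) + 1 = s then -(2 * e) else 0)
    else if (j : ℕ) = (i : ℕ) + 1 then c ((i : ℕ) + 1)
    else if (i : ℕ) = (j : ℕ) + 1 then c ((j : ℕ) + 1)
    else 0


variable {p s : ℕ} {e : ZMod p} {c : ℕ → ZMod p}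

lemma triD_sub (m : ℕ) :
    (triD p (m+1) s e c).submatrix Fin.castSucc Fin.castSucc = triD p m s e c := by
  ext i j
  simp [triD, Fin.castSucc_inj]

lemma sa1 (n : ℕ) (j : Fin n) :
    ((Fin.last n).castSucc).succAbove j.castSucc = j.castSucc.castSucc := by
  ext
  simp [Fin.succAbove, Fin.lt_def, j.isLt]

lemma sa2 (n : ℕ) :
    ((Fin.last n).castSucc).succAbove (Fin.last n) = Fin.last (n+1) := by
  ext
  simp [Fin.succAbove, Fin.lt_def]

lemma triD_rec (n : ℕ) :
    (triD p (n+2) s e c).det =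
      (if n + 2 = s then -(2*e) else 0) * (triD p (n+1) s e c).det
        - (c (n+1))^2 * (triD p n s e c).det := by
  have hz : ∀ j : Fin n, triD p (n+2) s e c (Fin.last (n+1)) j.castSucc.castSucc = 0 := by
    intro j
    simp only [triD, Matrix.of_apply]
    rw [if_neg (by simp [Fin.ext_iff]; omega),
        if_neg (by simp [Fin.ext_iff]; omega : ¬((j.castSucc.castSucc : Fin (n+2)) : ℕ) = (Fin.last (n+1) : ℕ) + 1),
        if_neg (by simp [Fin.ext_iff]; omega : ¬((Fin.last (n+1) : Fin (n+2)) : ℕ) = ((j.castSucc.castSucc : Fin (n+2)) : ℕ) + 1)]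
  rw [Matrix.det_succ_row _ (Fin.last (n+1))]
  rw [Fin.sum_univ_castSucc, Fin.sum_univ_castSucc]
  rw [Finset.sum_eq_zero (fun j _ => by rw [hz]; ring)]
  -- the diagonal term
  have hdiag : triD p (n+2) s e c (Fin.last (n+1)) (Fin.last (n+1))
      = (if n + 2 = s then -(2*e) else 0) := by
    simp [triD, Fin.last]
  have hsub1 : ((triD p (n+2) s e c).submatrix (Fin.last (n+1)).succAbove
      (Fin.last (n+1)).succAbove) = triD p (n+1) s e c := by
    rw [Fin.succAbove_last, triD_sub]
  -- the off-diagonal term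
  have hoff : triD p (n+2) s e c (Fin.last (n+1)) (Fin.last n).castSucc = c (n+1) := by
    simp only [triD, Matrix.of_apply]
    rw [if_neg (by simp [Fin.ext_iff]), if_neg (by simp; omega), if_pos (by simp)]
    simp
  -- the minor B and its determinant
  set B := (triD p (n+2) s e c).submatrix (Fin.last (n+1)).succAbove
      ((Fin.last n).castSucc.succAbove) with hB
  have hBdet : B.det = c (n+1) * (triD p n s e c).det := by
    rw [Matrix.det_succ_column _ (Fin.last n), Fin.sum_univ_castSucc]
    have hBz : ∀ i : Fin n, B i.castSucc (Fin.last n) = 0 := by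
      intro i
      simp only [hB, Matrix.submatrix_apply, Fin.succAbove_last, sa2, triD, Matrix.of_apply]
      rw [if_neg (by simp [Fin.ext_iff]; omega),
          if_neg (by simp [Fin.ext_iff]; omega : ¬((Fin.last (n+1) : Fin (n+2)) : ℕ) = ((i.castSucc.castSucc : Fin (n+2)) : ℕ) + 1),
          if_neg (by simp [Fin.ext_iff]; omega : ¬((i.castSucc.castSucc : Fin (n+2)) : ℕ) = ((Fin.last (n+1) : Fin (n+2)) : ℕ) + 1)]
    rw [Finset.sum_eq_zero (fun i _ => by rw [hBz]; ring), zero_add]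
    have hBlast : B (Fin.last n) (Fin.last n) = c (n+1) := by
      simp only [hB, Matrix.submatrix_apply, Fin.succAbove_last, sa2, triD, Matrix.of_apply]
      rw [if_neg (by simp [Fin.ext_iff]), if_pos (by simp)]
      simp
    have hC : B.submatrix (Fin.last n).succAbove (Fin.last n).succAbove = triD p n s e c := by
      rw [Fin.succAbove_last]
      have : B.submatrix Fin.castSucc Fin.castSucc
          = ((triD p (n+2) s e c).submatrix Fin.castSucc Fin.castSucc).submatrix Fin.castSucc Fin.castSucc := by
        ext i j
        simp [hB, Fin.succAbove_last, sa1]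
      rw [this, triD_sub, triD_sub]
    rw [hBlast, hC]
    have : (-1 : ZMod p) ^ ((Fin.last n : ℕ) + (Fin.last n : ℕ)) = 1 := by
      simp only [Fin.val_last]; exact Even.neg_one_pow ⟨n, rfl⟩
    rw [this]; ring
  rw [hdiag, hsub1, hoff, hBdet]
  have h1 : (-1 : ZMod p) ^ ((Fin.last (n+1) : ℕ) + (Fin.last (n+1) : ℕ)) = 1 := by
    exact Even.neg_one_pow ⟨n+1, rfl⟩
  have h2 : (-1 : ZMod p) ^ ((Fin.last (n+1) : ℕ) + ((Fin.last n).castSucc : ℕ)) = -1 := by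
    simp only [Fin.val_last, Fin.coe_castSucc]
    exact Odd.neg_one_pow ⟨n, by ring⟩
  rw [h1, h2]; ring

lemma triD_det_zero : (triD p 0 s e c).det = 1 := Matrix.det_fin_zero

lemma triD_det_one : (triD p 1 s e c).det = if 1 = s then -(2*e) else 0 := by
  rw [Matrix.det_fin_one]; simp [triD]

noncomputable def fE (p : ℕ) (c : ℕ → ZMod p) (t : ℕ) : ZMod p :=
  ∏ k ∈ Finset.Icc 1 t, -(c (2*k-1))^2

noncomputable def fF (p s : ℕ) (c : ℕ → ZMod p) (n : ℕ) : ZMod p :=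
  ∏ k ∈ Finset.Icc ((s+1)/2) ((n-1)/2), -(c (2*k))^2

noncomputable def fD (p s : ℕ) (e : ZMod p) (c : ℕ → ZMod p) (n : ℕ) : ZMod p :=
  if Even n then fE p c (n/2)
  else if Odd s ∧ s ≤ n then (-(2*e)) * (fE p c ((s-1)/2) * fF p s c n) else 0

lemma triD_closed (n : ℕ) : (triD p n s e c).det = fD p s e c n := by
  induction n using Nat.strong_induction_on with
  | _ n ih =>
    match n with
    | 0 => simp [triD_det_zero, fD, fE]
    | 1 =>
      rw [triD_det_one, fD]
      rcases eq_or_ne s 1 with hs | hs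
      · subst hs
        simp [fE, fF, Finset.Icc_eq_empty_of_lt]
      · rw [if_neg (show ¬ (1:ℕ) = s from fun h => hs h.symm),
          if_neg (show ¬ Even 1 by decide),
          if_neg (show ¬ (Odd s ∧ s ≤ 1) by rintro ⟨h1, h2⟩; rcases h1 with ⟨u, hu⟩; omega)]
    | (n+2) =>
      rw [triD_rec, ih n (by omega), ih (n+1) (by omega)]
      rcases Nat.even_or_odd n with hn | hn
      · -- n even
        obtain ⟨t, ht⟩ := hn
        have hfn : fD p s e c n = fE p c t := by
          rw [fD, if_pos ⟨t, ht⟩]; congr 1; omega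
        have hfn2 : fD p s e c (n+2) = fE p c (t+1) := by
          rw [fD, if_pos ⟨t+1, by omega⟩]; congr 1; omega
        have hzero : (if n + 2 = s then -(2*e) else 0) * fD p s e c (n+1) = 0 := by
          split
          · rw [fD, if_neg (by simp [Nat.even_iff]; omega : ¬ Even (n+1)),
              if_neg (by omega)]; ring
          · ring
        rw [hzero, hfn, hfn2, zero_sub]
        rw [fE, fE, Finset.prod_Icc_succ_top (by omega : 1 ≤ t + 1)]
        have : 2 * (t+1) - 1 = n + 1 := by omega
        rw [this]; ring
      · -- n odd
        obtain ⟨t, ht⟩ := hn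
        have hne : ¬ Even (n+2) := by simp [Nat.even_iff]; omega
        have hno : ¬ Even n := by simp [Nat.even_iff]; omega
        by_cases hcond : Odd s ∧ s ≤ n + 2
        · rcases eq_or_ne s (n+2) with hs | hs
          · -- s = n+2
            have hfn : fD p s e c n = 0 := by
              rw [fD, if_neg hno, if_neg (by rintro ⟨_, h⟩; omega)]
            have hfn1 : fD p s e c (n+1) = fE p c ((s-1)/2) := by
              have hE : Even (n+1) := by rw [Nat.even_add_one]; exact hno
              rw [fD, if_pos hE]; congr 1; omega
            have hfn2 : fD p s e c (n+2) = -(2*e) * fE p c ((s-1)/2) := by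
              rw [fD, if_neg hne, if_pos hcond, fF,
                Finset.Icc_eq_empty_of_lt (by omega), Finset.prod_empty, mul_one]
            rw [hfn, hfn1, hfn2, if_pos hs.symm]; ring
          · -- s ≤ n (odd)
            have hsn : s ≤ n := by rcases hcond with ⟨⟨u, hu⟩, h2⟩; omega
            have hfn : fD p s e c n = -(2*e) * (fE p c ((s-1)/2) * fF p s c n) := by
              rw [fD, if_neg hno, if_pos ⟨hcond.1, hsn⟩]
            have hfn2 : fD p s e c (n+2) =
                -(2*e) * (fE p c ((s-1)/2) * fF p s c (n+2)) := by
              rw [fD, if_neg hne, if_pos hcond]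
            have hFF : fF p s c (n+2) = fF p s c n * -(c (n+1))^2 := by
              rcases hcond with ⟨⟨u, hu⟩, _⟩
              rw [fF, fF]
              have h1 : (n+2-1)/2 = (n-1)/2 + 1 := by omega
              rw [h1, Finset.prod_Icc_succ_top (by omega : (s+1)/2 ≤ (n-1)/2 + 1)]
              have : 2 * ((n-1)/2 + 1) = n + 1 := by omega
              rw [this]
            rw [hfn, hfn2, hFF, if_neg (fun h => hs h.symm)]; ring
        · have hfn : fD p s e c n = 0 := by
            rw [fD, if_neg hno, if_neg (by rintro ⟨h1, h2⟩; exact hcond ⟨h1, by omega⟩)]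
          have hfn2 : fD p s e c (n+2) = 0 := by
            rw [fD, if_neg hne, if_neg hcond]
          have hs : n + 2 ≠ s := by
            rintro rfl
            exact hcond ⟨⟨t+1, by omega⟩, le_refl _⟩
          rw [hfn, hfn2, if_neg hs]; ring

theorem stmt12 (p m : ℕ) [Fact p.Prime] (hodd : Odd p) (hm : 2 ≤ m)
    (s : ℕ) (hs1 : 1 ≤ s) (hsm : s ≤ m)
    (e : ZMod p) (he : e ≠ 0)
    (c : ℕ → ZMod p) (hc : ∀ k, 1 ≤ k → k ≤ m - 1 → c k ≠ 0) :
    (Even m →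
      (triD p m s e c).det = ∏ k ∈ Finset.Icc 1 (m / 2), -(c (2 * k - 1)) ^ 2 ∧
      (triD p m s e c).det ≠ 0) ∧
    (Odd m → Odd s →
      (triD p m s e c).det =
        (-(2 * e)) * ((∏ k ∈ Finset.Icc 1 ((s - 1) / 2), -(c (2 * k - 1)) ^ 2) *
          ∏ k ∈ Finset.Icc ((s + 1) / 2) ((m - 1) / 2), -(c (2 * k)) ^ 2) ∧
      (triD p m s e c).det ≠ 0) := by
  have hfac : ∀ (t : ℕ) (x : ZMod p), c t ≠ 0 → -(c t)^2 ≠ 0 := by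
    intro t x h
    exact neg_ne_zero.mpr (pow_ne_zero 2 h)
  constructor
  · intro hme
    have hform : (triD p m s e c).det
        = ∏ k ∈ Finset.Icc 1 (m / 2), -(c (2 * k - 1)) ^ 2 := by
      rw [triD_closed, fD, if_pos hme, fE]
    refine ⟨hform, ?_⟩
    rw [hform]
    apply Finset.prod_ne_zero_iff.mpr
    intro k hk
    simp only [Finset.mem_Icc] at hk
    rcases hme with ⟨u, hu⟩
    exact hfac _ 0 (hc (2*k-1) (by omega) (by omega))
  · intro hmo hso
    have hnem : ¬ Even m := by rcases hmo with ⟨u, hu⟩; simp [Nat.even_iff]; omega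
    have hform : (triD p m s e c).det =
        (-(2 * e)) * ((∏ k ∈ Finset.Icc 1 ((s - 1) / 2), -(c (2 * k - 1)) ^ 2) *
          ∏ k ∈ Finset.Icc ((s + 1) / 2) ((m - 1) / 2), -(c (2 * k)) ^ 2) := by
      rw [triD_closed, fD, if_neg hnem, if_pos ⟨hso, hsm⟩, fE, fF]
    refine ⟨hform, ?_⟩
    rw [hform]
    have h2 : (2 : ZMod p) ≠ 0 := by
      have hp := (Fact.out : p.Prime)
      have h : ¬ ((2:ℕ) : ZMod p) = 0 := by
        rw [ZMod.natCast_eq_zero_iff]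
        intro hdvd
        have := (Nat.prime_dvd_prime_iff_eq hp Nat.prime_two).mp hdvd
        rcases hodd with ⟨u, hu⟩; omega
      simpa using h
    apply mul_ne_zero
    · exact neg_ne_zero.mpr (mul_ne_zero h2 he)
    apply mul_ne_zero
    · apply Finset.prod_ne_zero_iff.mpr
      intro k hk
      simp only [Finset.mem_Icc] at hk
      rcases hso with ⟨u, hu⟩
      exact hfac _ 0 (hc (2*k-1) (by omega) (by omega))
    · apply Finset.prod_ne_zero_iff.mpr
      intro k hk
      simp only [Finset.mem_Icc] at hk
      rcases hmo with ⟨u, hu⟩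
      exact hfac _ 0 (hc (2*k) (by omega) (by omega))
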